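/- Let F be a nonempty intersecting family of k-element subsets of [n] with covering number τ(F) = τ ≥ 1. Then there exists a family H of τ-element subsets of [n] with |H| ≤ τ · k^{τ−1} that set-covers F, i.e., for every F ∈ F there exists H ∈ H with H ⊆ F. -/

import Mathlib

/-!
Start from the singletons of a minimum cover `C`: every member of `F` contains one of them.
Given a family of `i`-sets with `i < τ` that set-covers `F`, no member `S` is a cover, so some
`B ∈ F` is disjoint from `S`. As `F` is intersecting, every `A ∈ F` containing `S` meets `B` in
some `x`, hence contains `insert x S`. Replacing `S` by the at most `k` sets `insert x S`,
`x ∈ B`, raises the size by one and multiplies the number of sets by at most `k`; after `τ - 1`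
such steps we reach `τ`-sets, at most `τ · k ^ (τ - 1)` of them.
-/

open Finset

variable {α : Type*}

def SetCovers (H F : Finset (Finset α)) : Prop :=
  ∀ A ∈ F, ∃ h ∈ H, h ⊆ A

variable [DecidableEq α]

theorem setCovers_image_singleton {F : Finset (Finset α)} {C : Finset α}
    (hC : ∀ A ∈ F, (C ∩ A).Nonempty) : SetCovers (C.image ({·})) F := by
  intro A hA
  obtain ⟨x, hx⟩ := hC A hA
  rw [mem_inter] at hx
  exact ⟨{x}, mem_image_of_mem _ hx.1, singleton_subset_iff.2 hx.2⟩

theorem exists_disjoint_of_card_lt {F : Finset (Finset α)} {τ : ℕ}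
    (hmin : ∀ C : Finset α, (∀ A ∈ F, (C ∩ A).Nonempty) → τ ≤ #C)
    {S : Finset α} (hS : #S < τ) : ∃ B ∈ F, Disjoint S B := by
  by_contra! h
  exact hS.not_ge (hmin S fun A hA => not_disjoint_iff_nonempty_inter.1 (h A hA))

theorem SetCovers.exists_card_succ {G F : Finset (Finset α)} {m k : ℕ} (hGF : SetCovers G F)
    (hF : (F : Set (Finset α)).Intersecting) (hk : ∀ A ∈ F, #A ≤ k)
    (hG : ∀ S ∈ G, #S = m) (hdisj : ∀ S ∈ G, ∃ B ∈ F, Disjoint S B) :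
    ∃ G' : Finset (Finset α), SetCovers G' F ∧ (∀ S ∈ G', #S = m + 1) ∧ #G' ≤ #G * k := by
  choose! B hBF hSB using hdisj
  refine ⟨G.biUnion fun S => (B S).image (insert · S), ?_, ?_, ?_⟩
  · intro A hA
    obtain ⟨S, hS, hSA⟩ := hGF A hA
    obtain ⟨x, hxA, hxB⟩ := not_disjoint_iff.1 (hF hA (hBF S hS))
    exact ⟨insert x S, mem_biUnion.2 ⟨S, hS, mem_image_of_mem _ hxB⟩, insert_subset hxA hSA⟩
  · simp only [mem_biUnion, mem_image]
    rintro _ ⟨S, hS, x, hx, rfl⟩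
    rw [card_insert_of_notMem (disjoint_right.1 (hSB S hS) hx), hG S hS]
  · calc #(G.biUnion fun S => (B S).image (insert · S))
        ≤ ∑ S ∈ G, #((B S).image (insert · S)) := card_biUnion_le
      _ ≤ ∑ S ∈ G, k := sum_le_sum fun S hS => card_image_le.trans (hk _ (hBF S hS))
      _ = #G * k := by rw [sum_const, smul_eq_mul]

theorem exists_setCovers_card_eq_succ {F : Finset (Finset α)} {k τ : ℕ}
    (hF : (F : Set (Finset α)).Intersecting) (hk : ∀ A ∈ F, #A ≤ k)
    {C : Finset α} (hC : ∀ A ∈ F, (C ∩ A).Nonempty) (hCcard : #C = τ)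
    (hmin : ∀ C : Finset α, (∀ A ∈ F, (C ∩ A).Nonempty) → τ ≤ #C) :
    ∀ i, i + 1 ≤ τ →
      ∃ H : Finset (Finset α), SetCovers H F ∧ (∀ h ∈ H, #h = i + 1) ∧ #H ≤ τ * k ^ i
  | 0, _ =>
    ⟨C.image ({·}), setCovers_image_singleton hC,
      by simp only [mem_image]; rintro _ ⟨x, -, rfl⟩; exact card_singleton x,
      card_image_le.trans_eq (by rw [hCcard, pow_zero, mul_one])⟩
  | i + 1, hi => by
    obtain ⟨H, hHF, hH, hcard⟩ :=
      exists_setCovers_card_eq_succ hF hk hC hCcard hmin i (by omega)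
    obtain ⟨H', hH'F, hH', hcard'⟩ := hHF.exists_card_succ hF hk hH fun S hS =>
      exists_disjoint_of_card_lt hmin (by rw [hH S hS]; omega)
    refine ⟨H', hH'F, hH', hcard'.trans ?_⟩
    rw [pow_succ, ← mul_assoc]
    exact Nat.mul_le_mul_right k hcard

theorem setCover_of_intersecting_general (n k τ : ℕ) (hτ : 1 ≤ τ)
    (F : Finset (Finset (Fin n)))
    (huniform : ∀ A ∈ F, A.card = k)
    (hint : ∀ A ∈ F, ∀ B ∈ F, (A ∩ B).Nonempty)
    (hcov : ∃ C : Finset (Fin n), (∀ A ∈ F, (C ∩ A).Nonempty) ∧ C.card = τ)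
    (hmin : ∀ C : Finset (Fin n), (∀ A ∈ F, (C ∩ A).Nonempty) → τ ≤ C.card) :
    ∃ H : Finset (Finset (Fin n)),
      (∀ h ∈ H, h.card = τ) ∧
      H.card ≤ τ * k ^ (τ - 1) ∧
      ∀ A ∈ F, ∃ h ∈ H, h ⊆ A := by
  obtain ⟨C, hC, hCcard⟩ := hcov
  have hF : (F : Set (Finset (Fin n))).Intersecting := fun A hA B hB =>
    not_disjoint_iff_nonempty_inter.2 (hint A hA B hB)
  obtain ⟨H, hHF, hH, hcard⟩ := exists_setCovers_card_eq_succ hF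
    (fun A hA => (huniform A hA).le) hC hCcard hmin (τ - 1) (by omega)
  exact ⟨H, fun h hh => by rw [hH h hh]; omega, hcard, hHF⟩

/-- A nonempty intersecting family of `k`-subsets of `[n]` with covering number exactly `τ ≥ 1`
can be set-covered by a family of at most `τ · k^(τ-1)` sets of size `τ`. -/
theorem setCover_of_intersecting (n k τ : ℕ) (hτ : 1 ≤ τ)
    (F : Finset (Finset (Fin n))) (hne : F.Nonempty)
    (huniform : ∀ A ∈ F, A.card = k)
    (hint : ∀ A ∈ F, ∀ B ∈ F, (A ∩ B).Nonempty)
    (hcov : ∃ C : Finset (Fin n), (∀ A ∈ F, (C ∩ A).Nonempty) ∧ C.card = τ)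
    (hmin : ∀ C : Finset (Fin n), (∀ A ∈ F, (C ∩ A).Nonempty) → τ ≤ C.card) :
    ∃ H : Finset (Finset (Fin n)),
      (∀ h ∈ H, h.card = τ) ∧
      H.card ≤ τ * k ^ (τ - 1) ∧
      ∀ A ∈ F, ∃ h ∈ H, h ⊆ A :=
  setCover_of_intersecting_general n k τ hτ F huniform hint hcov hmin
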